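/- Let σ : [0,1] → ℝ be measurable with 0 < s1 ≤ σ(u) ≤ s2 for all u ∈ [0,1], let T(t) = ∫_0^t σ²(u) du, ρ = T(1), τ = T(t), let c1 < c2, and let I(x,t) = (Φ'(z1) - Φ'(z2))² / ( √(ρ-τ) · (Φ(z2) - Φ(z1)) · (Φ(-z2) + Φ(z1)) ) with z1 = (c1 - x)/√(ρ-τ), z2 = (c2 - x)/√(ρ-τ). Define for t ∈ (0,1) the function G(t) = σ²(t) / ( 2π √(ρ-τ) √(2πτ) ) · ∫_{-∞}^{∞} I(x,t) e^{-x²/2} dx. Then ∫_0^1 G(t) dt < ∞. -/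

import Mathlib

/-!
Write `r = √(ρ - τ)` and `zᵢ = (cᵢ - x) / r`, so that `I(x,t) = F(z1, z2) / r` with
`z2 - z1 = (c2 - c1) / r ≥ δ := (c2 - c1) / s2`. On pairs with `z2 - z1 ≥ δ` the ratio `F` has
Gaussian tails, `F(z1, z2) ≤ A (e^{-z1²/4} + e^{-z2²/4})`: when `z1 ≥ 0` the increment
`Φ(z2) - Φ(z1)` is at least `δ Φ'(z1 + δ)`, and `Φ'(z1)² / Φ'(z1 + δ) = O(e^{-z1²/4})`; the case
`z2 ≤ 0` is its mirror image under `(z1, z2) ↦ (-z2, -z1)`; when `z1 < 0 < z2` the increment is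
bounded below and `Φ'(z)² / Φ(z) = O(e^{-z²/4})` for `z ≤ 0`. Substituting `z = (c - x) / r`
makes `∫ I(x,t) e^{-x²/2} dx` bounded uniformly in `t`, while `s1² t ≤ τ` and `s1² (1 - t) ≤ ρ - τ`
bound the prefactor of `G(t)` by a multiple of `1 / √(t (1 - t))`, which is integrable on `(0,1)`.
-/

open MeasureTheory Real Set Filter

/-- The standard normal density `Φ'(z) = (1/√(2π)) e^{-z²/2}`. -/
noncomputable def Φ' (z : ℝ) : ℝ := (Real.sqrt (2 * Real.pi))⁻¹ * Real.exp (-z ^ 2 / 2)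

/-- The standard normal cumulative distribution function `Φ`. -/
noncomputable def Φ (z : ℝ) : ℝ := ∫ u in Set.Iic z, Φ' u

/-- `I(x,t)` of the paper: with `T(t) = ∫_0^t σ²`, `ρ = T(1)`, `τ = T(t)`,
`r = √(ρ - τ)`, `z1 = (c1 - x)/r`, `z2 = (c2 - x)/r`. -/
noncomputable def Ifun (σ : ℝ → ℝ) (c1 c2 t x : ℝ) : ℝ :=
  let r := Real.sqrt ((∫ u in (0:ℝ)..1, (σ u) ^ 2) - ∫ u in (0:ℝ)..t, (σ u) ^ 2)
  let z1 := (c1 - x) / r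
  let z2 := (c2 - x) / r
  (Φ' z1 - Φ' z2) ^ 2 / (r * (Φ z2 - Φ z1) * (Φ (-z2) + Φ z1))

/-- `G(t) = σ²(t)/(2π √(ρ-τ) √(2πτ)) · ∫_ℝ I(x,t) e^{-x²/2} dx`, i.e. `E[α²(t)]`. -/
noncomputable def Gfun (σ : ℝ → ℝ) (c1 c2 t : ℝ) : ℝ :=
  (σ t) ^ 2 /
      (2 * Real.pi *
        Real.sqrt ((∫ u in (0:ℝ)..1, (σ u) ^ 2) - ∫ u in (0:ℝ)..t, (σ u) ^ 2) *
        Real.sqrt (2 * Real.pi * ∫ u in (0:ℝ)..t, (σ u) ^ 2)) *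
    ∫ x : ℝ, Ifun σ c1 c2 t x * Real.exp (-x ^ 2 / 2)

lemma Φ'_eq_gaussianPDFReal : Φ' = ProbabilityTheory.gaussianPDFReal 0 1 := by
  ext z; simp [Φ', ProbabilityTheory.gaussianPDFReal]

lemma Φ'_pos (z : ℝ) : 0 < Φ' z := by unfold Φ'; positivity

@[fun_prop]
lemma measurable_Φ' : Measurable Φ' :=
  Φ'_eq_gaussianPDFReal ▸ ProbabilityTheory.measurable_gaussianPDFReal 0 1

lemma integrable_Φ' : Integrable Φ' :=
  Φ'_eq_gaussianPDFReal ▸ ProbabilityTheory.integrable_gaussianPDFReal 0 1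

lemma Φ'_neg (z : ℝ) : Φ' (-z) = Φ' z := by simp [Φ']

lemma Φ'_le_of_abs_le {a b : ℝ} (h : |a| ≤ |b|) : Φ' b ≤ Φ' a := by
  unfold Φ'
  have := sq_le_sq.2 h
  gcongr

lemma Φ_sub_Φ (a b : ℝ) : Φ b - Φ a = ∫ u in a..b, Φ' u :=
  intervalIntegral.integral_Iic_sub_Iic integrable_Φ'.integrableOn integrable_Φ'.integrableOn

lemma Φ_sub_Φ_eq_neg (a b : ℝ) : Φ b - Φ a = Φ (-a) - Φ (-b) := by
  simp only [Φ_sub_Φ, ← intervalIntegral.integral_comp_neg, Φ'_neg]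

lemma Φ_nonneg (z : ℝ) : 0 ≤ Φ z :=
  setIntegral_nonneg measurableSet_Iic fun u _ => (Φ'_pos u).le

lemma Φ_mono : Monotone Φ := fun _ _ hab =>
  setIntegral_mono_set integrable_Φ'.integrableOn (.of_forall fun z => (Φ'_pos z).le)
    (Iic_subset_Iic.2 hab).eventuallyLE

@[fun_prop]
lemma measurable_Φ : Measurable Φ := Φ_mono.measurable

lemma mul_le_Φ_sub_Φ {a b c : ℝ} (hab : a ≤ b) (hc : ∀ u ∈ Icc a b, c ≤ Φ' u) :
    (b - a) * c ≤ Φ b - Φ a := by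
  rw [Φ_sub_Φ, ← smul_eq_mul, ← intervalIntegral.integral_const]
  exact intervalIntegral.integral_mono_on hab intervalIntegrable_const
    integrable_Φ'.intervalIntegrable hc

lemma Φ'_sub_one_le_Φ {z : ℝ} (hz : z ≤ 0) : Φ' (z - 1) ≤ Φ z := by
  have hgap := mul_le_Φ_sub_Φ (sub_le_self z zero_le_one) fun u hu =>
    Φ'_le_of_abs_le (a := u) (b := z - 1) (by
      rw [abs_of_nonpos (by linarith [hu.2]), abs_of_neg (by linarith)]; linarith [hu.1])
  linarith [Φ_nonneg (z - 1)]

lemma Φ_zero_pos : 0 < Φ 0 :=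
  (Φ'_pos _).trans_le (Φ'_sub_one_le_Φ le_rfl)

lemma sq_Φ'_le_mul_Φ'_add (z δ : ℝ) :
    Φ' z ^ 2 ≤ (√(2 * π))⁻¹ * exp (3 * δ ^ 2 / 2) * exp (-z ^ 2 / 4) * Φ' (z + δ) := by
  have key : exp (-z ^ 2 / 2) ^ 2 ≤
      exp (3 * δ ^ 2 / 2) * exp (-z ^ 2 / 4) * exp (-(z + δ) ^ 2 / 2) := by
    rw [← exp_nat_mul, ← exp_add, ← exp_add]
    exact exp_le_exp.2 (by nlinarith [sq_nonneg (δ - z / 2)])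
  calc Φ' z ^ 2 = (√(2 * π))⁻¹ * ((√(2 * π))⁻¹ * exp (-z ^ 2 / 2) ^ 2) := by
        unfold Φ'; ring
    _ ≤ (√(2 * π))⁻¹ * ((√(2 * π))⁻¹ *
        (exp (3 * δ ^ 2 / 2) * exp (-z ^ 2 / 4) * exp (-(z + δ) ^ 2 / 2))) := by gcongr
    _ = _ := by unfold Φ'; ring

lemma sq_Φ'_le_mul_Φ {z : ℝ} (hz : z ≤ 0) :
    Φ' z ^ 2 ≤ (√(2 * π))⁻¹ * exp (3 / 2) * exp (-z ^ 2 / 4) * Φ z := by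
  have h := sq_Φ'_le_mul_Φ'_add z (-1)
  norm_num only [← sub_eq_add_neg] at h
  exact h.trans (by gcongr; exact Φ'_sub_one_le_Φ hz)

-- With `r`, `z1`, `z2` as in `Ifun`, `Ifun σ c1 c2 t x = driftRatio z1 z2 / r`.
noncomputable def driftRatio (z1 z2 : ℝ) : ℝ :=
  (Φ' z1 - Φ' z2) ^ 2 / ((Φ z2 - Φ z1) * (Φ (-z2) + Φ z1))

lemma driftRatio_nonneg {z1 z2 : ℝ} (h : z1 ≤ z2) : 0 ≤ driftRatio z1 z2 := by
  have := Φ_mono h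
  have := Φ_nonneg (-z2)
  have := Φ_nonneg z1
  unfold driftRatio
  apply div_nonneg (sq_nonneg _) (mul_nonneg _ _) <;> linarith

lemma driftRatio_neg (z1 z2 : ℝ) : driftRatio (-z2) (-z1) = driftRatio z1 z2 := by
  unfold driftRatio
  rw [Φ'_neg, Φ'_neg, neg_neg, ← Φ_sub_Φ_eq_neg, add_comm (Φ z1), sub_sq_comm]

@[fun_prop]
lemma measurable_driftRatio : Measurable fun v : ℝ × ℝ => driftRatio v.1 v.2 := by
  unfold driftRatio; fun_prop

lemma exists_driftRatio_le_of_nonneg {δ : ℝ} (hδ : 0 < δ) :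
    ∃ A, ∀ z1 z2, 0 ≤ z1 → z1 + δ ≤ z2 →
      driftRatio z1 z2 ≤ A * (exp (-z1 ^ 2 / 4) + exp (-z2 ^ 2 / 4)) := by
  refine ⟨(√(2 * π))⁻¹ * exp (3 * δ ^ 2 / 2) / (δ * Φ 0), fun z1 z2 hz1 hz12 => ?_⟩
  have hnum : (Φ' z1 - Φ' z2) ^ 2 ≤ Φ' z1 ^ 2 := by
    have : Φ' z2 ≤ Φ' z1 := Φ'_le_of_abs_le (by
      rw [abs_of_nonneg hz1, abs_of_nonneg (by linarith)]; linarith)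
    nlinarith [Φ'_pos z2]
  have hgap : δ * Φ' (z1 + δ) ≤ Φ z2 - Φ z1 := by
    have h := mul_le_Φ_sub_Φ (le_add_of_nonneg_right (a := z1) hδ.le) fun u hu =>
      Φ'_le_of_abs_le (by
        rw [abs_of_nonneg (a := u) (by linarith [hu.1]), abs_of_nonneg (a := z1 + δ) (by linarith)]
        exact hu.2)
    rw [add_sub_cancel_left] at h
    linarith [Φ_mono hz12]
  have hsum : Φ 0 ≤ Φ (-z2) + Φ z1 := by linarith [Φ_nonneg (-z2), Φ_mono hz1]
  have := Φ'_pos (z1 + δ)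
  have := Φ_zero_pos
  calc driftRatio z1 z2 ≤ Φ' z1 ^ 2 / (δ * Φ' (z1 + δ) * Φ 0) := by
        unfold driftRatio
        gcongr
        linarith [Φ_mono (by linarith : z1 ≤ z2)]
    _ ≤ (√(2 * π))⁻¹ * exp (3 * δ ^ 2 / 2) * exp (-z1 ^ 2 / 4) * Φ' (z1 + δ) /
          (δ * Φ' (z1 + δ) * Φ 0) := by gcongr; exact sq_Φ'_le_mul_Φ'_add z1 δ
    _ = (√(2 * π))⁻¹ * exp (3 * δ ^ 2 / 2) / (δ * Φ 0) * exp (-z1 ^ 2 / 4) := by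
        field_simp
    _ ≤ _ := by
        gcongr
        linarith [exp_pos (-z2 ^ 2 / 4)]

lemma exists_driftRatio_le_of_neg_of_pos {δ : ℝ} (hδ : 0 < δ) :
    ∃ A, ∀ z1 z2, z1 < 0 → 0 < z2 → z1 + δ ≤ z2 →
      driftRatio z1 z2 ≤ A * (exp (-z1 ^ 2 / 4) + exp (-z2 ^ 2 / 4)) := by
  set g := δ / 2 * Φ' (δ / 2)
  have hg : 0 < g := by have := Φ'_pos (δ / 2); positivity
  refine ⟨(√(2 * π))⁻¹ * exp (3 / 2) / g, fun z1 z2 hz1 hz2 hz12 => ?_⟩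
  -- `[z1, z2]` contains `[0, δ/2]` or `[-δ/2, 0]`, over which `Φ` grows by at least `g`.
  have hgap : g ≤ Φ z2 - Φ z1 := by
    have hg0 : g ≤ Φ (δ / 2) - Φ 0 := by
      simpa using mul_le_Φ_sub_Φ (a := 0) (b := δ / 2) (by positivity) fun u hu =>
        Φ'_le_of_abs_le (by rw [abs_of_nonneg hu.1, abs_of_nonneg (by positivity)]; exact hu.2)
    rcases le_total (δ / 2) z2 with h | h
    · linarith [Φ_mono h, Φ_mono hz1.le]
    · have := Φ_sub_Φ_eq_neg (-(δ / 2)) 0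
      rw [neg_neg, neg_zero] at this
      linarith [Φ_mono hz2.le, Φ_mono (show z1 ≤ -(δ / 2) by linarith)]
  have hΦ1 := (Φ'_pos _).trans_le (Φ'_sub_one_le_Φ hz1.le)
  have hΦ2 := (Φ'_pos _).trans_le (Φ'_sub_one_le_Φ (neg_nonpos.2 hz2.le))
  have hS1 : Φ z1 ≤ Φ (-z2) + Φ z1 := by linarith
  have hS2 : Φ (-z2) ≤ Φ (-z2) + Φ z1 := by linarith
  have hr1 := sq_Φ'_le_mul_Φ hz1.le
  have hr2 := sq_Φ'_le_mul_Φ (neg_nonpos.2 hz2.le)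
  rw [Φ'_neg, neg_sq] at hr2
  calc driftRatio z1 z2 ≤ (Φ' z1 ^ 2 + Φ' z2 ^ 2) / (g * (Φ (-z2) + Φ z1)) := by
        unfold driftRatio
        gcongr
        · nlinarith [Φ'_pos z1, Φ'_pos z2]
    _ = (Φ' z1 ^ 2 / (Φ (-z2) + Φ z1) + Φ' z2 ^ 2 / (Φ (-z2) + Φ z1)) / g := by
        rw [add_div, add_div, div_div, div_div, mul_comm g]
    _ ≤ (Φ' z1 ^ 2 / Φ z1 + Φ' z2 ^ 2 / Φ (-z2)) / g := by gcongr
    _ ≤ ((√(2 * π))⁻¹ * exp (3 / 2) * exp (-z1 ^ 2 / 4) +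
          (√(2 * π))⁻¹ * exp (3 / 2) * exp (-z2 ^ 2 / 4)) / g := by
        gcongr
        · rwa [div_le_iff₀ hΦ1]
        · rwa [div_le_iff₀ hΦ2]
    _ = _ := by ring

lemma exists_driftRatio_le {δ : ℝ} (hδ : 0 < δ) :
    ∃ A, ∀ z1 z2, z1 + δ ≤ z2 →
      driftRatio z1 z2 ≤ A * (exp (-z1 ^ 2 / 4) + exp (-z2 ^ 2 / 4)) := by
  obtain ⟨A, hA⟩ := exists_driftRatio_le_of_nonneg hδ
  obtain ⟨B, hB⟩ := exists_driftRatio_le_of_neg_of_pos hδ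
  refine ⟨max A B, fun z1 z2 hz12 => ?_⟩
  have hmax : ∀ C ≤ max A B, C * (exp (-z1 ^ 2 / 4) + exp (-z2 ^ 2 / 4)) ≤
      max A B * (exp (-z1 ^ 2 / 4) + exp (-z2 ^ 2 / 4)) := fun C hC => by gcongr
  rcases le_or_gt 0 z1 with hz1 | hz1
  · exact (hA z1 z2 hz1 hz12).trans (hmax A (le_max_left A B))
  rcases le_or_gt z2 0 with hz2 | hz2
  · have := hA (-z2) (-z1) (neg_nonneg.2 hz2) (by linarith)
    rw [driftRatio_neg, neg_sq, neg_sq, add_comm (exp _)] at this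
    exact this.trans (hmax A (le_max_left A B))
  · exact (hB z1 z2 hz1 hz2 hz12).trans (hmax B (le_max_right A B))

lemma integrable_comp_sub_div {g : ℝ → ℝ} (hg : Integrable g) (c : ℝ) {r : ℝ} (hr : r ≠ 0) :
    Integrable fun x => g ((c - x) / r) :=
  (hg.comp_div hr).comp_sub_left c

lemma integral_comp_sub_div (g : ℝ → ℝ) (c : ℝ) {r : ℝ} (hr : 0 < r) :
    ∫ x, g ((c - x) / r) = r * ∫ z, g z := by
  rw [integral_sub_left_eq_self (fun y => g (y / r)), Measure.integral_comp_div, abs_of_pos hr,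
    smul_eq_mul]

lemma integrable_exp_neg_sq_div_four : Integrable fun z : ℝ => exp (-z ^ 2 / 4) := by
  simpa [neg_div, div_eq_inv_mul] using integrable_exp_neg_mul_sq (b := 1 / 4) (by norm_num)

lemma norm_integral_driftRatio_le {δ A r c1 c2 : ℝ} (hδ : 0 ≤ δ) (hr : 0 < r)
    (hδr : δ ≤ (c2 - c1) / r)
    (hA : ∀ z1 z2, z1 + δ ≤ z2 →
      driftRatio z1 z2 ≤ A * (exp (-z1 ^ 2 / 4) + exp (-z2 ^ 2 / 4))) :
    ‖∫ x, driftRatio ((c1 - x) / r) ((c2 - x) / r) / r * exp (-x ^ 2 / 2)‖ ≤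
      2 * A * ∫ z, exp (-z ^ 2 / 4) := by
  have hz : ∀ x, (c1 - x) / r + δ ≤ (c2 - x) / r := fun x => by
    rw [show (c2 - x) / r = (c1 - x) / r + (c2 - c1) / r by ring]; linarith
  have hint : ∀ c, Integrable fun x => exp (-((c - x) / r) ^ 2 / 4) := fun c =>
    integrable_comp_sub_div integrable_exp_neg_sq_div_four c hr.ne'
  calc _ ≤ ∫ x, A / r * (exp (-((c1 - x) / r) ^ 2 / 4) + exp (-((c2 - x) / r) ^ 2 / 4)) := by
        refine norm_integral_le_of_norm_le (((hint c1).add (hint c2)).const_mul _)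
          (.of_forall fun x => ?_)
        have h0 := driftRatio_nonneg ((le_add_of_nonneg_right hδ).trans (hz x))
        have hexp : exp (-x ^ 2 / 2) ≤ 1 := exp_le_one_iff.2 (by nlinarith)
        rw [norm_mul, Real.norm_of_nonneg (by positivity), Real.norm_of_nonneg (exp_pos _).le]
        calc driftRatio _ _ / r * exp (-x ^ 2 / 2) ≤ driftRatio _ _ / r * 1 := by gcongr
          _ ≤ _ := by
            rw [mul_one, div_mul_eq_mul_div]
            exact div_le_div_of_nonneg_right (hA _ _ (hz x)) hr.le
    _ = 2 * A * ∫ z, exp (-z ^ 2 / 4) := by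
        rw [integral_const_mul, integral_add (hint c1) (hint c2),
          integral_comp_sub_div (fun z => exp (-z ^ 2 / 4)) c1 hr,
          integral_comp_sub_div (fun z => exp (-z ^ 2 / 4)) c2 hr]
        field_simp
        ring

-- `T(t)` of the paper.
noncomputable def quadVar (σ : ℝ → ℝ) (t : ℝ) : ℝ := ∫ u in (0:ℝ)..t, σ u ^ 2

-- `G(t)` as a function of `ρ`, `τ` and `σ(t)`; in these variables it is jointly measurable.
noncomputable def Gvar (ρ c1 c2 τ s : ℝ) : ℝ :=
  s ^ 2 / (2 * π * √(ρ - τ) * √(2 * π * τ)) *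
    ∫ x, driftRatio ((c1 - x) / √(ρ - τ)) ((c2 - x) / √(ρ - τ)) / √(ρ - τ) * exp (-x ^ 2 / 2)

lemma Gfun_eq_Gvar (σ : ℝ → ℝ) (c1 c2 t : ℝ) :
    Gfun σ c1 c2 t = Gvar (quadVar σ 1) c1 c2 (quadVar σ t) (σ t) := by
  simp only [Gfun, Gvar, Ifun, driftRatio, quadVar, div_div]
  congr! 4 with x
  ring

lemma measurable_Gvar (ρ c1 c2 : ℝ) : Measurable fun v : ℝ × ℝ => Gvar ρ c1 c2 v.1 v.2 := by
  have : StronglyMeasurable fun v : ℝ × ℝ => driftRatio ((c1 - v.2) / √(ρ - v.1))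
      ((c2 - v.2) / √(ρ - v.1)) / √(ρ - v.1) * exp (-v.2 ^ 2 / 2) := by
    apply Measurable.stronglyMeasurable; fun_prop
  unfold Gvar
  exact Measurable.mul (by fun_prop) (this.integral_prod_right'.measurable.comp measurable_fst)

section quadVar

variable {σ : ℝ → ℝ} {s1 s2 : ℝ}

lemma sq_mem_Icc_of_forall_mem_Icc (hσbd : ∀ u ∈ Icc (0:ℝ) 1, s1 ≤ σ u ∧ σ u ≤ s2)
    (hs1 : 0 ≤ s1) {u : ℝ} (hu : u ∈ Icc (0:ℝ) 1) : σ u ^ 2 ∈ Icc (s1 ^ 2) (s2 ^ 2) :=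
  ⟨pow_le_pow_left₀ hs1 (hσbd u hu).1 2,
    pow_le_pow_left₀ (hs1.trans (hσbd u hu).1) (hσbd u hu).2 2⟩

lemma integrableOn_sq (hσ : Measurable σ) (hσbd : ∀ u ∈ Icc (0:ℝ) 1, s1 ≤ σ u ∧ σ u ≤ s2)
    (hs1 : 0 ≤ s1) : IntegrableOn (fun u => σ u ^ 2) (Icc 0 1) :=
  .of_bound measure_Icc_lt_top (by fun_prop) (s2 ^ 2) <|
    (ae_restrict_iff' measurableSet_Icc).2 <| .of_forall fun u hu => by
      rw [Real.norm_of_nonneg (sq_nonneg _)]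
      exact (sq_mem_Icc_of_forall_mem_Icc hσbd hs1 hu).2

lemma quadVar_sub_mem_Icc (hσ : Measurable σ) (hσbd : ∀ u ∈ Icc (0:ℝ) 1, s1 ≤ σ u ∧ σ u ≤ s2)
    (hs1 : 0 ≤ s1) {a b : ℝ} (ha : 0 ≤ a) (hab : a ≤ b) (hb : b ≤ 1) :
    quadVar σ b - quadVar σ a ∈ Icc (s1 ^ 2 * (b - a)) (s2 ^ 2 * (b - a)) := by
  have hint : ∀ x y, 0 ≤ x → x ≤ y → y ≤ 1 → IntervalIntegrable (fun u => σ u ^ 2) volume x y :=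
    fun x y hx hxy hy => ((integrableOn_sq hσ hσbd hs1).mono_set
      (by rw [uIcc_of_le hxy]; exact Icc_subset_Icc hx hy)).intervalIntegrable
  have hbd : ∀ u ∈ Icc a b, σ u ^ 2 ∈ Icc (s1 ^ 2) (s2 ^ 2) := fun u hu =>
    sq_mem_Icc_of_forall_mem_Icc hσbd hs1 ⟨ha.trans hu.1, hu.2.trans hb⟩
  rw [quadVar, quadVar, intervalIntegral.integral_interval_sub_left
    (hint 0 b le_rfl (ha.trans hab) hb) (hint 0 a le_rfl ha (hab.trans hb)), mul_comm (s1 ^ 2),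
    mul_comm (s2 ^ 2), ← smul_eq_mul, ← smul_eq_mul, ← intervalIntegral.integral_const,
    ← intervalIntegral.integral_const]
  exact ⟨intervalIntegral.integral_mono_on hab intervalIntegrable_const (hint a b ha hab hb)
      fun u hu => (hbd u hu).1,
    intervalIntegral.integral_mono_on hab (hint a b ha hab hb) intervalIntegrable_const
      fun u hu => (hbd u hu).2⟩

lemma aestronglyMeasurable_Gfun (hσ : Measurable σ)
    (hσbd : ∀ u ∈ Icc (0:ℝ) 1, s1 ≤ σ u ∧ σ u ≤ s2) (hs1 : 0 ≤ s1) (c1 c2 : ℝ) :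
    AEStronglyMeasurable (Gfun σ c1 c2) (volume.restrict (Ioo 0 1)) := by
  have hquadVar : AEMeasurable (quadVar σ) (volume.restrict (Ioo 0 1)) := by
    have := intervalIntegral.continuousOn_primitive_interval (a := 0) (b := 1)
      (by rw [uIcc_of_le zero_le_one]; exact integrableOn_sq hσ hσbd hs1)
    rw [uIcc_of_le zero_le_one] at this
    exact (this.mono Ioo_subset_Icc_self).aemeasurable measurableSet_Ioo
  simp only [funext (Gfun_eq_Gvar σ c1 c2)]
  exact ((measurable_Gvar _ c1 c2).comp_aemeasurable
    (hquadVar.prodMk hσ.aemeasurable)).aestronglyMeasurable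

end quadVar

lemma inv_sqrt_mul_inv_sqrt_one_sub_le {t : ℝ} (ht : t ∈ Ioo (0:ℝ) 1) :
    (√t)⁻¹ * (√(1 - t))⁻¹ ≤ (√t)⁻¹ + (√(1 - t))⁻¹ := by
  have h1 : 0 < √t := sqrt_pos.2 ht.1
  have h2 : 0 < √(1 - t) := sqrt_pos.2 (by linarith [ht.2])
  have hsum : 1 ≤ √t + √(1 - t) := by
    nlinarith [sq_sqrt ht.1.le, sq_sqrt (by linarith [ht.2] : 0 ≤ 1 - t)]
  calc (√t)⁻¹ * (√(1 - t))⁻¹ = 1 / (√t * √(1 - t)) := by rw [one_div, mul_inv]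
    _ ≤ (√t + √(1 - t)) / (√t * √(1 - t)) := by gcongr
    _ = (√t)⁻¹ + (√(1 - t))⁻¹ := by field_simp; ring

lemma integrableOn_inv_sqrt_mul_inv_sqrt_one_sub :
    IntegrableOn (fun t => (√t)⁻¹ * (√(1 - t))⁻¹) (Ioo 0 1) := by
  have hrpow : IntervalIntegrable (fun t : ℝ => t ^ (-(1 / 2) : ℝ)) volume 0 1 :=
    intervalIntegral.intervalIntegrable_rpow' (by norm_num)
  have hinv : ∀ t : ℝ, 0 ≤ t → t ^ (-(1 / 2) : ℝ) = (√t)⁻¹ := fun t ht => by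
    rw [rpow_neg ht, sqrt_eq_rpow]
  have h1 : IntegrableOn (fun t => (√t)⁻¹) (Ioo 0 1) :=
    ((intervalIntegrable_iff_integrableOn_Ioo_of_le zero_le_one).1 hrpow).congr_fun
      (fun t ht => hinv t ht.1.le) measurableSet_Ioo
  have h2 : IntegrableOn (fun t => (√(1 - t))⁻¹) (Ioo 0 1) := by
    have := (hrpow.comp_sub_left 1).symm
    norm_num only at this
    exact ((intervalIntegrable_iff_integrableOn_Ioo_of_le zero_le_one).1 this).congr_fun
      (fun t ht => hinv (1 - t) (by linarith [ht.2])) measurableSet_Ioo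
  refine (h1.add h2).mono' (by fun_prop)
    ((ae_restrict_iff' measurableSet_Ioo).2 (.of_forall fun t ht => ?_))
  rw [Real.norm_of_nonneg (by positivity)]
  exact inv_sqrt_mul_inv_sqrt_one_sub_le ht

lemma exists_norm_Gfun_le {σ : ℝ → ℝ} {s1 s2 : ℝ} (hσ : Measurable σ) (hs1 : 0 < s1)
    (hσbd : ∀ u ∈ Icc (0:ℝ) 1, s1 ≤ σ u ∧ σ u ≤ s2) {c1 c2 : ℝ} (hc : c1 < c2) :
    ∃ K, ∀ t ∈ Ioo (0:ℝ) 1, ‖Gfun σ c1 c2 t‖ ≤ K * ((√t)⁻¹ * (√(1 - t))⁻¹) := by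
  have hs2 : 0 < s2 := by linarith [hσbd 0 ⟨le_rfl, zero_le_one⟩]
  have hδ : 0 < (c2 - c1) / s2 := div_pos (sub_pos.2 hc) hs2
  obtain ⟨A, hA⟩ := exists_driftRatio_le hδ
  set C := 2 * A * ∫ z, exp (-z ^ 2 / 4)
  refine ⟨s2 ^ 2 / (2 * π * √(2 * π) * s1 ^ 2) * C, fun t ht => ?_⟩
  have hρτ := quadVar_sub_mem_Icc hσ hσbd hs1.le ht.1.le ht.2.le le_rfl
  have hτ := quadVar_sub_mem_Icc hσ hσbd hs1.le le_rfl ht.1.le ht.2.le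
  simp only [quadVar, intervalIntegral.integral_same, sub_zero] at hτ
  set r := √(quadVar σ 1 - quadVar σ t)
  have hr_lb : s1 * √(1 - t) ≤ r := by
    rw [← sqrt_sq hs1.le, ← sqrt_mul (sq_nonneg _)]; exact sqrt_le_sqrt hρτ.1
  have hr : 0 < r := (mul_pos hs1 (sqrt_pos.2 (sub_pos.2 ht.2))).trans_le hr_lb
  have hr_ub : r ≤ s2 := by
    rw [← sqrt_sq hs2.le]; exact sqrt_le_sqrt (hρτ.2.trans (by nlinarith [ht.1]))
  have hτ_lb : s1 * √t ≤ √(quadVar σ t) := by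
    rw [← sqrt_sq hs1.le, ← sqrt_mul (sq_nonneg _)]; exact sqrt_le_sqrt hτ.1
  have hJ : ‖∫ x, driftRatio ((c1 - x) / r) ((c2 - x) / r) / r * exp (-x ^ 2 / 2)‖ ≤ C :=
    norm_integral_driftRatio_le hδ.le hr
      (div_le_div_of_nonneg_left (sub_pos.2 hc).le hr hr_ub) hA
  have hpref : σ t ^ 2 / (2 * π * r * √(2 * π * quadVar σ t)) ≤
      s2 ^ 2 / (2 * π * √(2 * π) * s1 ^ 2) * ((√t)⁻¹ * (√(1 - t))⁻¹) := by
    have hσt := (sq_mem_Icc_of_forall_mem_Icc hσbd hs1.le (Ioo_subset_Icc_self ht)).2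
    have hτ' : √(2 * π) * (s1 * √t) ≤ √(2 * π * quadVar σ t) := by
      rw [sqrt_mul (by positivity : (0:ℝ) ≤ 2 * π)]
      exact mul_le_mul_of_nonneg_left hτ_lb (sqrt_nonneg _)
    have := sqrt_pos.2 ht.1
    have := sqrt_pos.2 (sub_pos.2 ht.2)
    calc _ ≤ s2 ^ 2 / (2 * π * (s1 * √(1 - t)) * (√(2 * π) * (s1 * √t))) := by gcongr
      _ = _ := by field_simp
  rw [Gfun_eq_Gvar, Gvar, norm_mul, Real.norm_of_nonneg (by positivity)]
  calc _ ≤ s2 ^ 2 / (2 * π * √(2 * π) * s1 ^ 2) * ((√t)⁻¹ * (√(1 - t))⁻¹) * C :=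
        mul_le_mul hpref hJ (norm_nonneg _) (by positivity)
    _ = _ := by ring

/-- `∫_0^1 G(t) dt < ∞`, the analytic content of Conjecture 4.9 of
Pikovsky and Karatzas. -/
theorem G_integrable (σ : ℝ → ℝ) (hσ : Measurable σ) (s1 s2 : ℝ) (hs1 : 0 < s1)
    (hσbd : ∀ u ∈ Set.Icc (0:ℝ) 1, s1 ≤ σ u ∧ σ u ≤ s2)
    (c1 c2 : ℝ) (hc : c1 < c2) :
    IntegrableOn (fun t : ℝ => Gfun σ c1 c2 t) (Set.Ioo 0 1) volume := by
  obtain ⟨K, hK⟩ := exists_norm_Gfun_le hσ hs1 hσbd hc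
  exact (integrableOn_inv_sqrt_mul_inv_sqrt_one_sub.const_mul K).mono'
    (aestronglyMeasurable_Gfun hσ hσbd hs1.le c1 c2)
    ((ae_restrict_iff' measurableSet_Ioo).2 (.of_forall hK))
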